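/- Let n ≥ 1 be odd, let 0 ≤ θ_0 < θ_1 < ... < θ_{n-1} < 2π be real nodes, define β_k(θ) = ((−1)^k Π_{p≠k} sin((θ − θ_p)/2)) / (Σ_{j=0}^{n-1} (−1)^j Π_{p≠j} sin((θ − θ_p)/2)) and b_{k,j}(θ) = (2^j/j!) sin^j((θ − θ_k)/2) · β_k(θ)^{j+1}. Then for every j ∈ ℕ and every pair of distinct indices i ≠ k, the (j+1)-st iterated derivative of b_{k,j} at θ_i equals (−1)^{(j+1)(k+i)} · ((j+1)/2) · (1 / sin((θ_i − θ_k)/2)). -/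

import Mathlib

open scoped BigOperators

/-- The pole-free form of Berrut's trigonometric basis function for odd `n`. -/
noncomputable def berrutBasisOdd (n : ℕ) (θ : Fin n → ℝ) (i : Fin n) (t : ℝ) : ℝ :=
  ((-1 : ℝ) ^ (i : ℕ) * ∏ p ∈ Finset.univ.erase i, Real.sin ((t - θ p) / 2)) /
    (∑ j : Fin n, (-1 : ℝ) ^ (j : ℕ) *
      ∏ p ∈ Finset.univ.erase j, Real.sin ((t - θ p) / 2))

/-- The trigonometric Hermite basis for odd `n`. -/
noncomputable def trigHermiteBasisOdd (n : ℕ) (θ : Fin n → ℝ) (k : Fin n) (j : ℕ)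
    (t : ℝ) : ℝ :=
  ((2 : ℝ) ^ j / (Nat.factorial j : ℝ)) * Real.sin ((t - θ k) / 2) ^ j *
    berrutBasisOdd n θ k t ^ (j + 1)

/-!
At a node `θ_i ≠ θ_k` the Berrut function `β_k` vanishes. Writing
`b_{k,j} = g · β_k ^ (j+1)` with `g` smooth, every term of the Leibniz expansion of the
`(j+1)`-st derivative at `θ_i` keeps a factor `β_k(θ_i) = 0`, except the one in which each factor
`β_k` is differentiated once; hence `b_{k,j}^{(j+1)}(θ_i) = (j+1)! g(θ_i) β_k'(θ_i)^(j+1)`.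
At `θ_i` only the `i`-th summand of the denominator of `β_k` survives, and only the factor
`sin((t - θ_i)/2)` of the numerator contributes to its derivative, so
`β_k'(θ_i) = (-1)^(k+i) / (2 sin((θ_i - θ_k)/2))`.
-/

open Finset Real
open scoped ContDiff Nat

section LeadingTerm

variable {𝕜 : Type*} [NontriviallyNormedField 𝕜] {s : Set 𝕜} {x : 𝕜} {g h : 𝕜 → 𝕜}

theorem iteratedDeriv_mul_pow_of_eq_zero (hs : IsOpen s) (hx : x ∈ s)
    (hg : ContDiffOn 𝕜 ∞ g s) (hh : ContDiffOn 𝕜 ∞ h s) (h0 : h x = 0)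
    {m r : ℕ} (hmr : m ≤ r) :
    iteratedDeriv m (fun t => g t * h t ^ r) x =
      if m = r then r ! * g x * deriv h x ^ r else 0 := by
  induction m generalizing r g with
  | zero =>
    rcases r.eq_zero_or_pos with rfl | hr
    · simp
    · rw [if_neg (by omega)]
      simp [h0, zero_pow hr.ne']
  | succ m ih =>
    obtain ⟨r, rfl⟩ : ∃ r', r = r' + 1 := ⟨r - 1, by omega⟩
    have hdiff : ∀ {f : 𝕜 → 𝕜}, ContDiffOn 𝕜 ∞ f s → ∀ y ∈ s, HasDerivAt f (deriv f y) y :=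
      fun hf y hy => ((hf.differentiableOn (by simp)).differentiableAt
        (hs.mem_nhds hy)).hasDerivAt
    set G : 𝕜 → 𝕜 := fun t => deriv g t * h t + (r + 1) * g t * deriv h t
    have hderiv : deriv (fun t => g t * h t ^ (r + 1)) =ᶠ[nhds x] fun t => G t * h t ^ r := by
      filter_upwards [hs.mem_nhds hx] with y hy
      refine ((hdiff hg y hy).mul ((hdiff hh y hy).pow (r + 1))).deriv.trans ?_
      simp only [G, Pi.pow_apply, Nat.add_sub_cancel]
      push_cast
      ring
    have hG : ContDiffOn 𝕜 ∞ G s :=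
      ((hg.deriv_of_isOpen hs (by simp)).mul hh).add
        ((contDiffOn_const.mul hg).mul (hh.deriv_of_isOpen hs (by simp)))
    rw [iteratedDeriv_succ', hderiv.iteratedDeriv_eq m, ih hG (by omega : m ≤ r)]
    by_cases hmr' : m = r
    · subst hmr'
      simp only [if_true, G, h0, Nat.factorial_succ]
      push_cast
      ring
    · rw [if_neg hmr', if_neg (by omega)]

theorem iteratedDeriv_mul_pow_self_of_eq_zero (hs : IsOpen s) (hx : x ∈ s)
    (hg : ContDiffOn 𝕜 ∞ g s) (hh : ContDiffOn 𝕜 ∞ h s) (h0 : h x = 0) (r : ℕ) :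
    iteratedDeriv r (fun t => g t * h t ^ r) x = r ! * g x * deriv h x ^ r := by
  simpa using iteratedDeriv_mul_pow_of_eq_zero hs hx hg hh h0 le_rfl

end LeadingTerm

theorem HasDerivAt.finsetProd_of_eq_zero {ι 𝕜 𝔸 : Type*} [DecidableEq ι]
    [NontriviallyNormedField 𝕜] [NormedCommRing 𝔸] [NormedAlgebra 𝕜 𝔸] {u : Finset ι}
    {f : ι → 𝕜 → 𝔸} {f' : ι → 𝔸} {x : 𝕜} (hf : ∀ p ∈ u, HasDerivAt (f p) (f' p) x)
    {i : ι} (hi : i ∈ u) (hfi : f i x = 0) :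
    HasDerivAt (fun t => ∏ p ∈ u, f p t) (f' i * ∏ p ∈ u.erase i, f p x) x := by
  have hprod := HasDerivAt.fun_finsetProd hf
  rwa [Finset.sum_eq_single i (fun q _ hqi => by
      rw [Finset.prod_eq_zero (Finset.mem_erase.mpr ⟨Ne.symm hqi, hi⟩) hfi, zero_smul])
    (fun h => absurd hi h), smul_eq_mul, mul_comm] at hprod

theorem contDiff_sin_half_sub (a : ℝ) : ContDiff ℝ ∞ fun t => sin ((t - a) / 2) :=
  contDiff_sin.comp ((contDiff_id.sub contDiff_const).div_const 2)

theorem hasDerivAt_sin_half_sub (a x : ℝ) :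
    HasDerivAt (fun t => sin ((t - a) / 2)) (cos ((x - a) / 2) / 2) x :=
  ((hasDerivAt_id x).sub_const a |>.div_const 2).sin.congr_deriv (by simp [div_eq_mul_inv])

theorem sin_half_sub_ne_zero {a b : ℝ} (ha₀ : 0 ≤ a) (ha : a < 2 * π) (hb₀ : 0 ≤ b)
    (hb : b < 2 * π) (hab : a ≠ b) : sin ((a - b) / 2) ≠ 0 := by
  rw [Ne, sin_eq_zero_iff_of_lt_of_lt (by linarith) (by linarith)]
  intro h
  exact hab (by linarith)

section BerrutBasis

variable {n : ℕ} (θ : Fin n → ℝ)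

noncomputable def nodeSinProd (q : Fin n) (t : ℝ) : ℝ :=
  ∏ p ∈ univ.erase q, sin ((t - θ p) / 2)

noncomputable def berrutDenom (t : ℝ) : ℝ :=
  ∑ q : Fin n, (-1) ^ (q : ℕ) * nodeSinProd θ q t

theorem berrutBasisOdd_eq_div (k : Fin n) :
    berrutBasisOdd n θ k = fun t => (-1) ^ (k : ℕ) * nodeSinProd θ k t / berrutDenom θ t :=
  rfl

theorem contDiff_nodeSinProd (q : Fin n) : ContDiff ℝ ∞ (nodeSinProd θ q) :=
  contDiff_prod fun p _ => contDiff_sin_half_sub (θ p)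

theorem contDiff_berrutDenom : ContDiff ℝ ∞ (berrutDenom θ) :=
  ContDiff.sum fun q _ => contDiff_const.mul (contDiff_nodeSinProd θ q)

theorem isOpen_berrutDenom_ne_zero : IsOpen {t | berrutDenom θ t ≠ 0} :=
  isOpen_compl_singleton.preimage (contDiff_berrutDenom θ).continuous

theorem contDiffOn_berrutBasisOdd (k : Fin n) :
    ContDiffOn ℝ ∞ (berrutBasisOdd n θ k) {t | berrutDenom θ t ≠ 0} :=
  (contDiff_const.mul (contDiff_nodeSinProd θ k)).contDiffOn.div
    (contDiff_berrutDenom θ).contDiffOn fun _ ht => ht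

variable {θ}

theorem nodeSinProd_node_of_ne {q i : Fin n} (hqi : q ≠ i) : nodeSinProd θ q (θ i) = 0 :=
  prod_eq_zero (mem_erase.mpr ⟨hqi.symm, mem_univ i⟩) (by simp)

theorem nodeSinProd_node_ne_zero {i : Fin n} (hS : ∀ p, p ≠ i → sin ((θ i - θ p) / 2) ≠ 0) :
    nodeSinProd θ i (θ i) ≠ 0 :=
  prod_ne_zero_iff.mpr fun p hp => hS p (mem_erase.mp hp).1

theorem nodeSinProd_node_eq_mul {i k : Fin n} (hki : k ≠ i) :
    nodeSinProd θ i (θ i) =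
      sin ((θ i - θ k) / 2) * ∏ p ∈ (univ.erase k).erase i, sin ((θ i - θ p) / 2) := by
  rw [nodeSinProd, erase_right_comm, mul_prod_erase _ (fun p => sin ((θ i - θ p) / 2))
    (mem_erase.mpr ⟨hki, mem_univ k⟩)]

theorem hasDerivAt_nodeSinProd_node {i k : Fin n} (hki : k ≠ i) :
    HasDerivAt (nodeSinProd θ k)
      ((∏ p ∈ (univ.erase k).erase i, sin ((θ i - θ p) / 2)) / 2) (θ i) := by
  have := HasDerivAt.finsetProd_of_eq_zero (fun p _ => hasDerivAt_sin_half_sub (θ p) (θ i))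
    (mem_erase.mpr ⟨hki.symm, mem_univ i⟩) (by simp)
  rw [sub_self, zero_div, cos_zero] at this
  exact this.congr_deriv (by ring)

theorem berrutDenom_node (i : Fin n) :
    berrutDenom θ (θ i) = (-1) ^ (i : ℕ) * nodeSinProd θ i (θ i) :=
  sum_eq_single i (fun q _ hqi => by rw [nodeSinProd_node_of_ne hqi, mul_zero]) (by simp)

theorem berrutDenom_node_ne_zero {i : Fin n}
    (hS : ∀ p, p ≠ i → sin ((θ i - θ p) / 2) ≠ 0) : berrutDenom θ (θ i) ≠ 0 := by
  rw [berrutDenom_node]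
  exact mul_ne_zero (pow_ne_zero _ (by norm_num)) (nodeSinProd_node_ne_zero hS)

theorem berrutBasisOdd_node_of_ne {i k : Fin n} (hki : k ≠ i) :
    berrutBasisOdd n θ k (θ i) = 0 := by
  simp [berrutBasisOdd_eq_div, nodeSinProd_node_of_ne hki]

theorem hasDerivAt_berrutBasisOdd_node {i k : Fin n}
    (hS : ∀ p, p ≠ i → sin ((θ i - θ p) / 2) ≠ 0) (hki : k ≠ i) :
    HasDerivAt (berrutBasisOdd n θ k)
      ((-1) ^ ((k : ℕ) + i) / (2 * sin ((θ i - θ k) / 2))) (θ i) := by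
  have hD := berrutDenom_node_ne_zero hS
  have hquot := ((hasDerivAt_nodeSinProd_node hki).const_mul ((-1 : ℝ) ^ (k : ℕ))).div
    ((contDiff_berrutDenom θ).differentiable (by simp) (θ i)).hasDerivAt hD
  refine hquot.congr_deriv ?_
  have hM : ∏ p ∈ (univ.erase k).erase i, sin ((θ i - θ p) / 2) ≠ 0 :=
    prod_ne_zero_iff.mpr fun p hp => hS p (mem_erase.mp hp).1
  have hSk : sin ((θ i - θ k) / 2) ≠ 0 := hS k hki
  have hsign : ((-1 : ℝ) ^ (i : ℕ)) ^ 2 = 1 := by rw [← pow_mul, mul_comm, pow_mul]; norm_num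
  rw [berrutDenom_node, nodeSinProd_node_eq_mul hki, nodeSinProd_node_of_ne hki, pow_add,
    mul_pow, hsign]
  field_simp
  ring

end BerrutBasis

theorem trigHermite_offdiagonal_diffmatrix_general
    (n : ℕ)
    (θ : Fin n → ℝ) (hθ : StrictMono θ)
    (hθ0 : ∀ p, 0 ≤ θ p) (hθ2π : ∀ p, θ p < 2 * Real.pi) :
    ∀ (j : ℕ) (i k : Fin n), i ≠ k →
      iteratedDeriv (j + 1) (trigHermiteBasisOdd n θ k j) (θ i)
        = (-1 : ℝ) ^ ((j + 1) * ((k : ℕ) + (i : ℕ))) * (((j : ℝ) + 1) / 2) *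
            (1 / Real.sin ((θ i - θ k) / 2)) := by
  intro j i k hik
  have hS : ∀ p, p ≠ i → sin ((θ i - θ p) / 2) ≠ 0 := fun p hpi =>
    sin_half_sub_ne_zero (hθ0 i) (hθ2π i) (hθ0 p) (hθ2π p) (hθ.injective.ne hpi.symm)
  have hg : ContDiffOn ℝ ∞ (fun t => 2 ^ j / (j ! : ℝ) * sin ((t - θ k) / 2) ^ j)
      {t | berrutDenom θ t ≠ 0} :=
    (contDiff_const.mul ((contDiff_sin_half_sub (θ k)).pow j)).contDiffOn
  have hleading := iteratedDeriv_mul_pow_self_of_eq_zero (isOpen_berrutDenom_ne_zero θ)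
    (berrutDenom_node_ne_zero hS) hg (contDiffOn_berrutBasisOdd θ k)
    (berrutBasisOdd_node_of_ne hik.symm) (j + 1)
  refine hleading.trans ?_
  rw [(hasDerivAt_berrutBasisOdd_node hS hik.symm).deriv]
  have hSk : sin ((θ i - θ k) / 2) ≠ 0 := hS k hik.symm
  rw [div_pow, ← pow_mul, mul_comm ((k : ℕ) + i), Nat.factorial_succ]
  push_cast
  field_simp
  ring

/-- for odd `n`, the off-diagonal entries of the differentiation matrix
`D_j^{j+1}`: `b_{k,j}^{(j+1)}(θ_i) = (−1)^{(j+1)(k+i)} ((j+1)/2) csc((θ_i − θ_k)/2)`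
for `i ≠ k`. -/
theorem trigHermite_offdiagonal_diffmatrix
    (n : ℕ) (hn : 1 ≤ n) (hodd : Odd n)
    (θ : Fin n → ℝ) (hθ : StrictMono θ)
    (hθ0 : ∀ p, 0 ≤ θ p) (hθ2π : ∀ p, θ p < 2 * Real.pi) :
    ∀ (j : ℕ) (i k : Fin n), i ≠ k →
      iteratedDeriv (j + 1) (trigHermiteBasisOdd n θ k j) (θ i)
        = (-1 : ℝ) ^ ((j + 1) * ((k : ℕ) + (i : ℕ))) * (((j : ℝ) + 1) / 2) *
            (1 / Real.sin ((θ i - θ k) / 2)) :=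
  trigHermite_offdiagonal_diffmatrix_general n θ hθ hθ0 hθ2π
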